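/- Let x, y be permutations of [n] with x(n) = y(n) = n, and let v = s_j s_{j+1} ⋯ s_{n−1} for some j ∈ [n−1]. Then x ⊵_R y if and only if v·x ⊵_R v·y. -/

import Mathlib

/-! Reachability of permutations has a purely combinatorial description: `x ⊵_R y` iff for
every position `i`, each value in the interval `(y i, x i]` is taken by `y` at a later position.
Left multiplication by `v = s_j ⋯ s_{n-1}` moves the common fixed value `n` of `x` and `y` to `j`
and relabels all other values increasingly, so it preserves this condition: the only new value
that can enter an interval is `j = v (y n)`, and it is taken at the last position. -/

/-- `o` is the outcome of running parking Algorithm A on preference vector `a`: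
car `i` parks in the first unoccupied spot in `[a i, n]`, and every car parks. -/
def IsAOutcome {n : ℕ} (a o : Fin n → Fin n) : Prop :=
  Function.Injective o ∧ ∀ i, a i ≤ o i ∧
    ∀ s, a i ≤ s → s < o i → ∃ j, j < i ∧ o j = s

/-- `a` is a parking function. -/
def IsParkingFunction {n : ℕ} (a : Fin n → Fin n) : Prop :=
  ∃ o, IsAOutcome a o

/-- `o` is the outcome of running parking Algorithm B on the pair `(a, b)`:
car `i` parks in the first unoccupied spot in `[a i, b i]`, and every car parks. -/
def IsBOutcome {n : ℕ} (a b o : Fin n → Fin n) : Prop :=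
  Function.Injective o ∧ ∀ i, a i ≤ o i ∧ o i ≤ b i ∧
    ∀ s, a i ≤ s → s < o i → ∃ j, j < i ∧ o j = s

/-- `(a, b)` is an interval parking function. -/
def IsIPF {n : ℕ} (a b : Fin n → Fin n) : Prop :=
  ∃ o, IsBOutcome a b o

/-- The conjugate (reverse complement) `x*` of `x`, with `x*(i) = n + 1 - x(n + 1 - i)`. -/
def pconj {n : ℕ} (f : Fin n → Fin n) : Fin n → Fin n :=
  fun i => (f i.rev).rev

/-- The pair `(x, y)` is reachable, `x ⊵_R y`: there is an IPF `(a, b)` with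
`O(a) = x` and `O(b*) = y*`. -/
def Reaches {n : ℕ} (x y : Fin n → Fin n) : Prop :=
  ∃ a b : Fin n → Fin n, IsIPF a b ∧ IsAOutcome a x ∧ IsAOutcome (pconj b) (pconj y)

/-- Pseudoreachability `x ≥_P y`: the reflexive-transitive closure of reachability. -/
def PseudoGE {n : ℕ} (x y : Equiv.Perm (Fin n)) : Prop :=
  Relation.ReflTransGen (fun u v : Equiv.Perm (Fin n) => Reaches ⇑u ⇑v) x y

/-- `#{k ∈ [i] : x(k) ≥ j}` (with `i`, `j` zero-indexed). -/
def bcount {n : ℕ} (x : Fin n → Fin n) (i j : Fin n) : ℕ :=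
  (Finset.univ.filter (fun k : Fin n => k ≤ i ∧ j ≤ x k)).card

/-- The Bruhat order `x ≥_B y` on the symmetric group. -/
def BruhatGE {n : ℕ} (x y : Equiv.Perm (Fin n)) : Prop :=
  ∀ i j : Fin n, bcount ⇑y i j ≤ bcount ⇑x i j

/-- The number of inversions (the Coxeter length) of `f`. -/
def invCount {n : ℕ} (f : Fin n → Fin n) : ℕ :=
  (Finset.univ.filter (fun p : Fin n × Fin n => p.1 < p.2 ∧ f p.2 < f p.1)).card

/-- The adjacent transposition `s_i` exchanging `i` and `i+1` (one-indexed),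
as a permutation of `Fin n`. -/
def sgen (n : ℕ) (i : ℕ) : Equiv.Perm (Fin n) :=
  if h : 1 ≤ i ∧ i < n then Equiv.swap ⟨i - 1, by omega⟩ ⟨i, h.2⟩ else 1

/-- Left weak order: `x ≥_W y` iff `x = s_{i₁} ⋯ s_{i_k} · y` with `ℓ(x) = ℓ(y) + k`. -/
def WeakGE {n : ℕ} (x y : Equiv.Perm (Fin n)) : Prop :=
  ∃ l : List ℕ, (∀ i ∈ l, 1 ≤ i ∧ i ≤ n - 1) ∧
    x = (l.map (sgen n)).prod * y ∧ invCount ⇑x = invCount ⇑y + l.length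

/-- The projection `x ↦ x̂` deleting the last position and the value `x(n)`. -/
def hatf {n : ℕ} (x : Fin (n + 1) → Fin (n + 1)) : Fin n → Fin n :=
  fun i =>
    if h : (x i.castSucc).val < (x (Fin.last n)).val
    then ⟨(x i.castSucc).val, by have h1 := (x (Fin.last n)).isLt; omega⟩
    else ⟨(x i.castSucc).val - 1, by have h1 := (x i.castSucc).isLt; have h2 := i.isLt; omega⟩

/-- `lam n f k` is `λ_k` of the permutation of `[n]` with one-line notation `f(1), …, f(n)`
(one-indexed): `λ_{n-1}(x) = n - x(n)` and `λ_k(x) = λ_k(x̄)` for `k ≤ n - 2`, where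
`x̄ ∈ S_{n-1}` is the restriction of `u⁻¹·x` (`u = s_{x(n)} ⋯ s_{n-1}`), concretely
`x̄(i) = x(i)` if `x(i) < x(n)` and `x̄(i) = x(i) - 1` if `x(i) > x(n)`. -/
def lam : ℕ → (ℕ → ℕ) → ℕ → ℕ
  | 0, _, _ => 0
  | n + 1, f, k =>
    if k = n then (n + 1) - f (n + 1)
    else lam n (fun i => if f i < f (n + 1) then f i else f i - 1) k

/-- The one-line notation of `x`, as a one-indexed function `ℕ → ℕ`. -/
def oneline {n : ℕ} (x : Fin n → Fin n) : ℕ → ℕ :=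
  fun i => if h : i - 1 < n then (x ⟨i - 1, h⟩).val + 1 else 0

/-- `y` contains the pattern `σ`. -/
def ContainsPattern {n m : ℕ} (y : Equiv.Perm (Fin n)) (σ : Equiv.Perm (Fin m)) : Prop :=
  ∃ f : Fin m → Fin n, StrictMono f ∧ ∀ j k, y (f j) < y (f k) ↔ σ j < σ k

/-- `x` is an AR (Arndt–Riehl) permutation: `x⁻¹(i) ≤ i + 1` for all `i ∈ [n]`. -/
def IsAR {n : ℕ} (x : Equiv.Perm (Fin n)) : Prop :=
  ∀ i : Fin n, (x.symm i).val ≤ i.val + 1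

open Function

namespace IsAOutcome

variable {n : ℕ} {a o o' : Fin n → Fin n}

theorem unique (h : IsAOutcome a o) (h' : IsAOutcome a o') : o = o' := by
  funext i
  induction i using WellFoundedLT.induction with
  | _ i ih =>
    rcases lt_trichotomy (o i) (o' i) with hlt | heq | hgt
    · obtain ⟨k, hki, hk⟩ := (h'.2 i).2 (o i) (h.2 i).1 hlt
      exact absurd (h.1 ((ih k hki).trans hk)) hki.ne
    · exact heq
    · obtain ⟨k, hki, hk⟩ := (h.2 i).2 (o' i) (h'.2 i).1 hgt
      exact absurd (h'.1 ((ih k hki).symm.trans hk)) hki.ne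

theorem self (ho : Injective o) : IsAOutcome o o :=
  ⟨ho, fun _ => ⟨le_rfl, fun _ h h' => absurd h h'.not_ge⟩⟩

end IsAOutcome

theorem IsBOutcome.isAOutcome {n : ℕ} {a b o : Fin n → Fin n} (h : IsBOutcome a b o) :
    IsAOutcome a o :=
  ⟨h.1, fun i => ⟨(h.2 i).1, (h.2 i).2.2⟩⟩

theorem isAOutcome_pconj_iff {n : ℕ} {b y : Fin n → Fin n} :
    IsAOutcome (pconj b) (pconj y) ↔
      Injective y ∧ ∀ i, y i ≤ b i ∧ ∀ u, y i < u → u ≤ b i → ∃ k, i < k ∧ y k = u := by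
  have hinj : Injective (pconj y) ↔ Injective y :=
    (Fin.rev_injective.of_comp_iff _).trans (Injective.of_comp_iff' _ Fin.rev_bijective)
  refine and_congr hinj (Fin.rev_surjective.forall.trans (forall_congr' fun i => ?_))
  simp only [pconj, Fin.rev_rev, Fin.rev_le_rev]
  refine and_congr_right' (Fin.rev_surjective.forall.trans (forall_congr' fun u => ?_))
  simp only [Fin.rev_le_rev, Fin.rev_lt_rev, Fin.rev_inj, Fin.rev_rev,
    Fin.rev_surjective.exists (p := fun k => k < i.rev ∧ _)]
  exact imp.swap

theorem reaches_iff {n : ℕ} (x y : Equiv.Perm (Fin n)) :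
    Reaches ⇑x ⇑y ↔ ∀ i u, y i < u → u ≤ x i → ∃ k, i < k ∧ y k = u := by
  constructor
  · rintro ⟨a, b, ⟨o, hab⟩, hax, hby⟩ i u hyu hux
    have hxb : x i ≤ b i := hab.isAOutcome.unique hax ▸ (hab.2 i).2.1
    exact (isAOutcome_pconj_iff.1 hby).2 i |>.2 u hyu (hux.trans hxb)
  · intro h
    refine ⟨x, x ⊔ y,
      ⟨x, x.injective, fun i => ⟨le_rfl, le_sup_left, fun _ h h' => absurd h h'.not_ge⟩⟩,
      IsAOutcome.self x.injective,
      isAOutcome_pconj_iff.2 ⟨y.injective, fun i => ⟨le_sup_right, ?_⟩⟩⟩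
    intro u hyu hu
    exact h i u hyu ((le_sup_iff.1 hu).resolve_right hyu.not_ge)

theorem Equiv.Perm.apply_lt_of_lt_of_isTop {n : ℕ} {x : Equiv.Perm (Fin n)} {m i : Fin n}
    (hm : IsTop m) (hx : x m = m) (hi : i < m) : x i < m :=
  (hm _).lt_of_ne fun h => hi.ne (x.injective (h.trans hx.symm))

theorem reaches_mul_iff_of_strictMonoOn {n : ℕ} {m : Fin n} (hm : IsTop m)
    {v x y : Equiv.Perm (Fin n)} (hv : StrictMonoOn v (Set.Iio m)) (hx : x m = m) (hy : y m = m) :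
    Reaches ⇑(v * x) ⇑(v * y) ↔ Reaches ⇑x ⇑y := by
  have hxm {i} (hi : i < m) : x i ∈ Set.Iio m := Equiv.Perm.apply_lt_of_lt_of_isTop hm hx hi
  have hym {i} (hi : i < m) : y i ∈ Set.Iio m := Equiv.Perm.apply_lt_of_lt_of_isTop hm hy hi
  have hlt_of_ne {i} (h : x i ≠ y i) : i < m := (hm i).lt_of_ne fun hi => h (by rw [hi, hx, hy])
  simp only [reaches_iff, Equiv.Perm.mul_apply]
  constructor
  · intro h i u hyu hux
    have hi : i < m := hlt_of_ne fun h => (hyu.trans_le hux).ne (by rw [h])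
    have hu : u ∈ Set.Iio m := hux.trans_lt (hxm hi)
    obtain ⟨k, hik, hk⟩ :=
      h i (v u) ((hv.lt_iff_lt (hym hi) hu).2 hyu) ((hv.le_iff_le hu (hxm hi)).2 hux)
    exact ⟨k, hik, v.injective hk⟩
  · intro h i u hyu hux
    have hi : i < m := hlt_of_ne fun h => (hyu.trans_le hux).ne (by rw [h])
    by_cases hu : u = v m
    · exact ⟨m, hi, by rw [hy, hu]⟩
    obtain ⟨w, rfl⟩ := v.surjective u
    have hw : w ∈ Set.Iio m := (hm w).lt_of_ne (mt (congrArg v) hu)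
    obtain ⟨k, hik, hk⟩ :=
      h i w ((hv.lt_iff_lt (hym hi) hw).1 hyu) ((hv.le_iff_le hw (hxm hi)).1 hux)
    exact ⟨k, hik, congrArg v hk⟩

-- Positions and values are zero-indexed while `j` is one-indexed, hence the shifts `j - 1`.
theorem prod_sgen_Ico_apply_val {n j : ℕ} (hj1 : 1 ≤ j) (hj2 : j ≤ n) (a : Fin n) :
    (((List.Ico j n).map (sgen n)).prod a : ℕ) =
      if (a : ℕ) = n - 1 then j - 1 else if j - 1 ≤ a then a + 1 else a := by
  induction hd : n - j generalizing j with
  | zero =>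
    obtain rfl : j = n := by omega
    simp only [List.Ico.self_empty, List.map_nil, List.prod_nil, Equiv.Perm.one_apply]
    split_ifs <;> omega
  | succ d ih =>
    have hjn : j < n := by omega
    have ih := ih (j := j + 1) (by omega) hjn (by omega)
    rw [List.Ico.eq_cons hjn, List.map_cons, List.prod_cons, Equiv.Perm.mul_apply, sgen,
      dif_pos ⟨hj1, hjn⟩, Equiv.swap_apply_def]
    simp only [Fin.ext_iff, apply_ite Fin.val]
    split_ifs at ih ⊢ <;> omega

theorem strictMonoOn_prod_sgen_Ico {n j : ℕ} (hj1 : 1 ≤ j) (hj2 : j ≤ n) {m : Fin n}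
    (hm : (m : ℕ) = n - 1) : StrictMonoOn ((List.Ico j n).map (sgen n)).prod (Set.Iio m) := by
  intro a ha b hb hab
  simp only [Set.mem_Iio, Fin.lt_def, hm] at ha hb hab ⊢
  rw [prod_sgen_Ico_apply_val hj1 hj2, prod_sgen_Ico_apply_val hj1 hj2]
  split_ifs <;> omega

/-- Prop. `v-reduction`. Let `x(n) = y(n) = n` and
`v = s_j s_{j+1} ⋯ s_{n-1}` for `j ∈ [n-1]`. Then `x ⊵_R y` iff `v·x ⊵_R v·y`. -/
theorem stmt13 {n : ℕ} (hn : 2 ≤ n) (x y : Equiv.Perm (Fin n))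
    (hx : x ⟨n - 1, by omega⟩ = ⟨n - 1, by omega⟩)
    (hy : y ⟨n - 1, by omega⟩ = ⟨n - 1, by omega⟩)
    (j : ℕ) (hj1 : 1 ≤ j) (hj2 : j ≤ n - 1) :
    Reaches ⇑x ⇑y ↔
      Reaches ⇑(((List.Ico j n).map (sgen n)).prod * x)
        ⇑(((List.Ico j n).map (sgen n)).prod * y) := by
  have hm : IsTop (⟨n - 1, by omega⟩ : Fin n) := fun a => Nat.le_sub_one_of_lt a.isLt
  have hv := strictMonoOn_prod_sgen_Ico hj1 (by omega) (m := ⟨n - 1, by omega⟩) rfl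
  exact (reaches_mul_iff_of_strictMonoOn hm hv hx hy).symm
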